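/- Let s be a Bosbach state on a bounded pseudo-BCK algebra A. Then s is a state-morphism if and only if Ker(s) = {a ∈ A : s(a) = 1} is a normal and maximal filter of A. -/
import Mathlib


universe u

class PseudoBCK (A : Type u) extends PartialOrder A where
  arr : A → A → A
  sarr : A → A → A
  one : A
  ax1  : ∀ x y z : A, arr x y ≤ sarr (arr y z) (arr x z)
  ax1' : ∀ x y z : A, sarr x y ≤ arr (sarr y z) (sarr x z)
  ax2  : ∀ x y : A, x ≤ sarr (arr x y) y
  ax2' : ∀ x y : A, x ≤ arr (sarr x y) y
  ax4  : ∀ x : A, x ≤ one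
  ax6  : ∀ x y : A, x ≤ y ↔ arr x y = one
  ax6' : ∀ x y : A, x ≤ y ↔ sarr x y = one

namespace PseudoBCK

variable {A : Type u} [PseudoBCK A]

/-- `x ∨₁ y = (x → y) ⤳ y`. -/
def sup1 (x y : A) : A := sarr (arr x y) y

/-- `x ∨₂ y = (x ⤳ y) → y`. -/
def sup2 (x y : A) : A := arr (sarr x y) y

end PseudoBCK

open PseudoBCK

class BoundedPseudoBCK (A : Type u) extends PseudoBCK A where
  zero : A
  zero_le : ∀ x : A, zero ≤ x

namespace BoundedPseudoBCK

variable {A : Type u} [BoundedPseudoBCK A]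

/-- `x⁻ = x → 0`. -/
def neg (x : A) : A := arr x zero

/-- `x˜ = x ⤳ 0`. -/
def tneg (x : A) : A := sarr x zero

end BoundedPseudoBCK

open BoundedPseudoBCK

/-- A Bosbach state on a bounded pseudo-BCK algebra. -/
def IsBosbachState (A : Type u) [BoundedPseudoBCK A] (s : A → ℝ) : Prop :=
  (∀ x : A, s x ∈ Set.Icc (0 : ℝ) 1) ∧
  s (zero : A) = 0 ∧ s (one : A) = 1 ∧
  (∀ x y : A, s x + s (arr x y) = s y + s (arr y x)) ∧
  (∀ x y : A, s x + s (sarr x y) = s y + s (sarr y x))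

/-- A state-morphism on a bounded pseudo-BCK algebra:
`m (x → y) = m (x ⤳ y) = min (1 - m x + m y) 1`. -/
def IsStateMorphism (A : Type u) [BoundedPseudoBCK A] (m : A → ℝ) : Prop :=
  (∀ x : A, m x ∈ Set.Icc (0 : ℝ) 1) ∧
  m (zero : A) = 0 ∧
  (∀ x y : A, m (arr x y) = min (1 - m x + m y) 1) ∧
  (∀ x y : A, m (sarr x y) = min (1 - m x + m y) 1)

/-- A filter (deductive system) of a pseudo-BCK algebra. -/
def IsBCKFilter (A : Type u) [PseudoBCK A] (F : Set A) : Prop :=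
  (one : A) ∈ F ∧ ∀ a b : A, a ∈ F → arr a b ∈ F → b ∈ F

/-- A normal filter: `a → b ∈ F ↔ a ⤳ b ∈ F`. -/
def IsBCKNormalFilter (A : Type u) [PseudoBCK A] (F : Set A) : Prop :=
  IsBCKFilter A F ∧ ∀ a b : A, arr a b ∈ F ↔ sarr a b ∈ F

/-- A maximal filter: proper and not properly contained in another proper filter. -/
def IsBCKMaximalFilter (A : Type u) [PseudoBCK A] (F : Set A) : Prop :=
  IsBCKFilter A F ∧ F ≠ Set.univ ∧
    ∀ G : Set A, IsBCKFilter A G → F ⊆ G → G ≠ Set.univ → G = F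

section Aux

variable {A : Type u}

section P

variable [PseudoBCK A]

lemma pbck_eq_one {x : A} (h : one ≤ x) : x = one := le_antisymm (ax4 x) h

lemma pbck_arr_eq_one {x y : A} (h : x ≤ y) : arr x y = one := (ax6 x y).mp h

lemma pbck_sarr_eq_one {x y : A} (h : x ≤ y) : sarr x y = one := (ax6' x y).mp h

lemma pbck_arr_one (x : A) : arr one x = x := by
  apply le_antisymm
  · exact (ax6' _ _).mpr (pbck_eq_one (ax2 one x))
  · have h := ax2' x x
    rwa [pbck_sarr_eq_one (le_refl x)] at h

lemma pbck_sarr_one (x : A) : sarr one x = x := by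
  apply le_antisymm
  · exact (ax6 _ _).mpr (pbck_eq_one (ax2' one x))
  · have h := ax2 x x
    rwa [pbck_arr_eq_one (le_refl x)] at h

lemma pbck_arr_antitone {x y : A} (h : x ≤ y) (z : A) : arr y z ≤ arr x z := by
  have h1 := ax1 x y z
  rw [pbck_arr_eq_one h] at h1
  exact (ax6' _ _).mpr (pbck_eq_one h1)

lemma pbck_sarr_antitone {x y : A} (h : x ≤ y) (z : A) : sarr y z ≤ sarr x z := by
  have h1 := ax1' x y z
  rw [pbck_sarr_eq_one h] at h1
  exact (ax6 _ _).mpr (pbck_eq_one h1)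

lemma pbck_arr_mono {y z : A} (h : y ≤ z) (x : A) : arr x y ≤ arr x z := by
  have h1 := ax1 x y z
  rwa [pbck_arr_eq_one h, pbck_sarr_one] at h1

lemma pbck_sarr_mono {y z : A} (h : y ≤ z) (x : A) : sarr x y ≤ sarr x z := by
  have h1 := ax1' x y z
  rwa [pbck_sarr_eq_one h, pbck_arr_one] at h1

lemma pbck_adj1 {p q r : A} (h : p ≤ arr q r) : q ≤ sarr p r :=
  le_trans (ax2 q r) (pbck_sarr_antitone h r)

lemma pbck_adj2 {p q r : A} (h : q ≤ sarr p r) : p ≤ arr q r :=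
  le_trans (ax2' p r) (pbck_arr_antitone h r)

lemma pbck_le_arr_self (x y : A) : y ≤ arr x y :=
  pbck_adj2 (by rw [pbck_sarr_eq_one (le_refl y)]; exact ax4 x)

lemma pbck_le_sarr_self (x y : A) : y ≤ sarr x y :=
  pbck_adj1 (by rw [pbck_arr_eq_one (le_refl y)]; exact ax4 x)

lemma pbck_exch (a b c : A) : arr a (sarr b c) = sarr b (arr a c) := by
  apply le_antisymm
  · exact le_trans (ax1 a (sarr b c) c) (pbck_sarr_antitone (ax2' b c) _)
  · exact le_trans (ax1' b (arr a c) c) (pbck_arr_antitone (ax2 a c) _)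

lemma pbck_arr_inner (u v w : A) : arr v w ≤ arr (arr u v) (arr u w) := pbck_adj2 (ax1 u v w)

def pIter (p : A) : ℕ → A → A
  | 0, b => b
  | n + 1, b => arr p (pIter p n b)

lemma pIter_zero (p b : A) : pIter p 0 b = b := rfl

lemma pIter_succ (p : A) (n : ℕ) (b : A) : pIter p (n + 1) b = arr p (pIter p n b) := rfl

lemma pbck_le_pIter (p : A) (n : ℕ) (b : A) : b ≤ pIter p n b := by
  induction n with
  | zero => exact le_refl b
  | succ n ih => exact le_trans ih (pbck_le_arr_self p _)

lemma pIter_mono (p : A) (n : ℕ) {b b' : A} (h : b ≤ b') : pIter p n b ≤ pIter p n b' := by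
  induction n with
  | zero => exact h
  | succ n ih => exact pbck_arr_mono ih p

lemma pIter_exch (p q : A) (n : ℕ) (b : A) : sarr q (pIter p n b) = pIter p n (sarr q b) := by
  induction n with
  | zero => rfl
  | succ n ih => rw [pIter_succ, ← pbck_exch, ih, pIter_succ]

lemma pIter_add (p : A) (m n : ℕ) (b : A) : pIter p (m + n) b = pIter p m (pIter p n b) := by
  induction m with
  | zero => rw [Nat.zero_add]; rfl
  | succ m ih => rw [Nat.succ_add, pIter_succ, ih, pIter_succ]

lemma pIter_J (p w u : A) (m : ℕ) : pIter p m w ≤ sarr (arr w u) (pIter p m u) := by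
  induction m with
  | zero => exact ax2 w u
  | succ m ih =>
    calc pIter p (m + 1) w = arr p (pIter p m w) := rfl
    _ ≤ arr p (sarr (arr w u) (pIter p m u)) := pbck_arr_mono ih p
    _ = sarr (arr w u) (arr p (pIter p m u)) := pbck_exch p (arr w u) _
    _ = sarr (arr w u) (pIter p (m + 1) u) := rfl

end P

section K

variable [BoundedPseudoBCK A] {s : A → ℝ}

lemma bs_nonneg (hs : IsBosbachState A s) (x : A) : 0 ≤ s x := (hs.1 x).1

lemma bs_le_one (hs : IsBosbachState A s) (x : A) : s x ≤ 1 := (hs.1 x).2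

lemma bs_one (hs : IsBosbachState A s) : s (one : A) = 1 := hs.2.2.1

lemma bs_zero (hs : IsBosbachState A s) : s (zero : A) = 0 := hs.2.1

lemma bsA (hs : IsBosbachState A s) (x y : A) :
    s x + s (arr x y) = s y + s (arr y x) := hs.2.2.2.1 x y

lemma bsS (hs : IsBosbachState A s) (x y : A) :
    s x + s (sarr x y) = s y + s (sarr y x) := hs.2.2.2.2 x y

lemma bs_mono (hs : IsBosbachState A s) {x y : A} (h : x ≤ y) : s x ≤ s y := by
  have h1 := bsA hs x y
  rw [pbck_arr_eq_one h, bs_one hs] at h1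
  have h2 := bs_le_one hs (arr y x)
  linarith

lemma bs_arr_exact (hs : IsBosbachState A s) {x y : A} (h : y ≤ x) :
    s (arr x y) = 1 + s y - s x := by
  have h1 := bsA hs x y
  rw [pbck_arr_eq_one h, bs_one hs] at h1
  linarith

lemma bs_sarr_exact (hs : IsBosbachState A s) {x y : A} (h : y ≤ x) :
    s (sarr x y) = 1 + s y - s x := by
  have h1 := bsS hs x y
  rw [pbck_sarr_eq_one h, bs_one hs] at h1
  linarith

lemma bs_up (hs : IsBosbachState A s) {x y : A} (h : x ≤ y) (hx : s x = 1) : s y = 1 :=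
  le_antisymm (bs_le_one hs y) (hx ▸ bs_mono hs h)

lemma bs_mp (hs : IsBosbachState A s) {a b : A} (ha : s a = 1) (hab : s (arr a b) = 1) :
    s b = 1 := by
  have h1 := bsA hs a b
  have h2 := bs_le_one hs (arr b a)
  have h3 := bs_le_one hs b
  rw [ha, hab] at h1
  linarith

lemma bs_mp' (hs : IsBosbachState A s) {a b : A} (ha : s a = 1) (hab : s (sarr a b) = 1) :
    s b = 1 := by
  have h1 := bsS hs a b
  have h2 := bs_le_one hs (sarr b a)
  have h3 := bs_le_one hs b
  rw [ha, hab] at h1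
  linarith

lemma bs_pre_of_le (hs : IsBosbachState A s) {x y : A} (h : x ≤ y) : s (arr x y) = 1 := by
  rw [pbck_arr_eq_one h]; exact bs_one hs

lemma bs_pre_exact (hs : IsBosbachState A s) {u v : A} (h : s (arr u v) = 1) :
    s (arr v u) = 1 + s u - s v := by
  have h1 := bsA hs u v
  rw [h] at h1
  linarith

lemma bs_pre_exact' (hs : IsBosbachState A s) {u v : A} (h : s (sarr u v) = 1) :
    s (sarr v u) = 1 + s u - s v := by
  have h1 := bsS hs u v
  rw [h] at h1
  linarith

lemma bs_pre_back (hs : IsBosbachState A s) {u v : A} (h : s (arr u v) = 1)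
    (hv : s u = s v) : s (arr v u) = 1 := by
  rw [bs_pre_exact hs h, hv]; ring

lemma bs_pre_trans (hs : IsBosbachState A s) {u v w : A} (h1 : s (arr u v) = 1)
    (h2 : s (arr v w) = 1) : s (arr u w) = 1 :=
  bs_mp' hs h2 (bs_up hs (ax1 u v w) h1)

lemma bs_norm (hn : IsBCKNormalFilter A {a : A | s a = 1}) (a b : A) :
    s (arr a b) = 1 ↔ s (sarr a b) = 1 := hn.2 a b

lemma bs_mono_pre (hs : IsBosbachState A s) {v w : A} (h : s (arr v w) = 1) (u : A) :
    s (arr (arr u v) (arr u w)) = 1 := bs_up hs (pbck_arr_inner u v w) h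

lemma bs_anti_pre (hs : IsBosbachState A s) (hn : IsBCKNormalFilter A {a : A | s a = 1})
    {u v : A} (h : s (arr u v) = 1) (w : A) : s (arr (arr v w) (arr u w)) = 1 :=
  (bs_norm hn _ _).mpr (bs_up hs (ax1 u v w) h)

lemma bs_anti_pre' (hs : IsBosbachState A s) (hn : IsBCKNormalFilter A {a : A | s a = 1})
    {u v : A} (h : s (arr u v) = 1) (w : A) : s (arr (sarr v w) (sarr u w)) = 1 :=
  bs_up hs (ax1' u v w) ((bs_norm hn u v).mp h)

lemma bs_adj_pre (hs : IsBosbachState A s) (hn : IsBCKNormalFilter A {a : A | s a = 1})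
    (u v w : A) : s (arr u (arr v w)) = 1 ↔ s (arr v (sarr u w)) = 1 := by
  rw [bs_norm hn u (arr v w), ← pbck_exch v u w]

lemma bs_lf (hs : IsBosbachState A s) (hn : IsBCKNormalFilter A {a : A | s a = 1})
    (hm : IsBCKMaximalFilter A {a : A | s a = 1}) {p : A} (hp : s p ≠ 1) (b : A) :
    ∃ n, s (pIter p n b) = 1 := by
  by_contra hcon
  push_neg at hcon
  have hfil : IsBCKFilter A {w : A | ∃ n, s (pIter p n w) = 1} := by
    constructor
    · exact ⟨0, bs_one hs⟩
    · rintro a c ⟨n, han⟩ ⟨m, hacm⟩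
      have st1 : s (sarr (arr a c) (pIter p n c)) = 1 := by
        have h1 := pIter_mono p n (ax2 a c)
        rw [← pIter_exch] at h1
        exact bs_up hs h1 han
      have st2 : s (arr (arr a c) (pIter p n c)) = 1 := (bs_norm hn _ _).mpr st1
      have st3 : s (sarr (arr (arr a c) (pIter p n c)) (pIter p m (pIter p n c))) = 1 :=
        bs_up hs (pIter_J p (arr a c) (pIter p n c) m) hacm
      exact ⟨m + n, by rw [pIter_add]; exact bs_mp' hs st2 st3⟩
  have hsub : {a : A | s a = 1} ⊆ {w : A | ∃ n, s (pIter p n w) = 1} := fun w hw => ⟨0, hw⟩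
  have hneq : {w : A | ∃ n, s (pIter p n w) = 1} ≠ Set.univ := by
    intro h
    obtain ⟨n, hn1⟩ := Set.eq_univ_iff_forall.mp h b
    exact hcon n hn1
  have heq := hm.2.2 _ hfil hsub hneq
  have hpG : p ∈ {w : A | ∃ n, s (pIter p n w) = 1} := by
    refine ⟨1, ?_⟩
    show s (arr p (pIter p 0 p)) = 1
    rw [pIter_zero, pbck_arr_eq_one (le_refl p)]
    exact bs_one hs
  rw [heq] at hpG
  exact hp hpG

lemma bs_LA (hs : IsBosbachState A s) (hn : IsBCKNormalFilter A {a : A | s a = 1})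
    (hm : IsBCKMaximalFilter A {a : A | s a = 1}) {p q : A} (hp : s p ≠ 1)
    (h : s (arr (arr p q) q) = 1) : s q = 1 := by
  have claim : ∀ n : ℕ, s (arr (pIter p (n + 1) q) q) = 1 := by
    intro n
    induction n with
    | zero => exact h
    | succ n ih => exact bs_pre_trans hs (bs_mono_pre hs ih p) h
  obtain ⟨n, hn1⟩ := bs_lf hs hn hm hp q
  cases n with
  | zero => exact hn1
  | succ n => exact bs_mp hs hn1 (claim n)

lemma bs_crux (hs : IsBosbachState A s) (hn : IsBCKNormalFilter A {a : A | s a = 1})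
    (hm : IsBCKMaximalFilter A {a : A | s a = 1}) {x y : A} (hxy : s x ≤ s y) :
    s (arr x y) = 1 := by
  by_contra hA
  have hyc : y ≤ arr x y := pbck_le_arr_self x y
  have hAlt : s (arr x y) < 1 := lt_of_le_of_ne (bs_le_one hs _) hA
  set c : A := arr x y with hc
  set c' : A := sarr x y with hc'
  set W : A := sarr c y with hW
  set b : A := arr y x with hb
  set N : A := arr W zero with hN
  have hxW : x ≤ W := by rw [hW, hc]; exact ax2 x y
  have hyW : y ≤ W := by rw [hW]; exact pbck_le_sarr_self c y
  have hsW : s W = 1 + s y - s c := by rw [hW]; exact bs_sarr_exact hs hyc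
  have hyc' : y ≤ c' := by rw [hc']; exact pbck_le_sarr_self x y
  have hxR' : x ≤ arr c' y := by rw [hc']; exact ax2' x y
  have hyR' : y ≤ arr c' y := pbck_le_arr_self c' y
  have hsR' : s (arr c' y) = 1 + s y - s c' := bs_arr_exact hs hyc'
  have hR2le : arr (arr c' y) y ≤ c := by rw [hc]; exact pbck_arr_antitone hxR' y
  have hsR2 : s (arr (arr c' y) y) = 1 + s y - s (arr c' y) := bs_arr_exact hs hyR'
  have hA'leA : s c' ≤ s c := by
    have h1 := bs_mono hs hR2le
    rw [hsR2, hsR'] at h1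
    linarith
  have hH2le : sarr W y ≤ c' := by rw [hc']; exact pbck_sarr_antitone hxW y
  have hsH2 : s (sarr W y) = 1 + s y - s W := bs_sarr_exact hs hyW
  have hAleA' : s c ≤ s c' := by
    have h1 := bs_mono hs hH2le
    rw [hsH2, hsW] at h1
    linarith
  have hAA' : s c' = s c := le_antisymm hA'leA hAleA'
  have hc'W1 : s (arr (sarr W y) c') = 1 := bs_pre_of_le hs hH2le
  have hc'W2 : s (arr c' (sarr W y)) = 1 :=
    bs_pre_back hs hc'W1 (by rw [hsH2, hsW]; linarith)
  have hWyle : arr W y ≤ c := by rw [hc]; exact pbck_arr_antitone hxW y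
  have hsWy : s (arr W y) = 1 + s y - s W := bs_arr_exact hs hyW
  have hWy1 : s (arr (arr W y) c) = 1 := bs_pre_of_le hs hWyle
  have hWy2 : s (arr c (arr W y)) = 1 := bs_pre_back hs hWy1 (by rw [hsWy, hsW]; ring)
  have hsb : s b = s x - s y + s c := by
    have h1 := bsA hs x y
    rw [← hc, ← hb] at h1
    linarith
  have hWxle : arr W x ≤ b := by rw [hb]; exact pbck_arr_antitone hyW x
  have hsWx : s (arr W x) = 1 + s x - s W := bs_arr_exact hs hxW
  have hWx1 : s (arr (arr W x) b) = 1 := bs_pre_of_le hs hWxle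
  have hWx2 : s (arr b (arr W x)) = 1 := bs_pre_back hs hWx1 (by rw [hsWx, hsW, hsb]; ring)
  have minU : ∀ D : A, s (arr x D) = 1 → s (arr y D) = 1 → s (arr W D) = 1 := by
    intro D hxD hyD
    have hm1 : s (arr (sarr D y) c') = 1 := by
      have h1 := bs_anti_pre' hs hn hxD y
      rwa [← hc'] at h1
    have hsyD : s (sarr y D) = 1 := (bs_norm hn y D).mp hyD
    have hsm : s (sarr D y) = 1 + s y - s D := bs_pre_exact' hs hsyD
    have hDmy : s (arr D (arr (sarr D y) y)) = 1 := bs_pre_of_le hs (ax2' D y)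
    have hsmy : s (arr (sarr D y) y) = 1 + s y - s (sarr D y) :=
      bs_arr_exact hs (pbck_le_sarr_self D y)
    have hmyD : s (arr (arr (sarr D y) y) D) = 1 :=
      bs_pre_back hs hDmy (by rw [hsmy, hsm]; ring)
    have hmc' : s (arr (sarr D y) (sarr W y)) = 1 := bs_pre_trans hs hm1 hc'W2
    have hWmy : s (arr W (arr (sarr D y) y)) = 1 := (bs_adj_pre hs hn W (sarr D y) y).mpr hmc'
    exact bs_pre_trans hs hWmy hmyD
  have hsN : s N = s c - s y := by
    rw [hN, bs_arr_exact hs (BoundedPseudoBCK.zero_le W), bs_zero hs, hsW]; ring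
  have hNne : s N ≠ 1 := by
    rw [hsN]
    intro hcontra
    have h1 := bs_nonneg hs y
    linarith
  have hpt1 : arr x zero ≤ arr (arr W x) N := by rw [hN]; exact pbck_adj2 (ax1 W x zero)
  have hrec1 : s (arr (arr (arr W x) N) (arr b N)) = 1 := bs_anti_pre hs hn hWx2 N
  have hrec2 : s (arr (arr x zero) (arr b N)) = 1 :=
    bs_pre_trans hs (bs_pre_of_le hs hpt1) hrec1
  have hrec3 : s (arr (sarr (arr b N) zero) (sarr (arr x zero) zero)) = 1 :=
    bs_anti_pre' hs hn hrec2 zero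
  have hsnx : s (arr x zero) = 1 - s x := by
    rw [bs_arr_exact hs (BoundedPseudoBCK.zero_le x), bs_zero hs]; ring
  have hstnx : s (sarr (arr x zero) zero) = s x := by
    rw [bs_sarr_exact hs (BoundedPseudoBCK.zero_le (arr x zero)), bs_zero hs, hsnx]; ring
  have htnx2 : s (arr (sarr (arr x zero) zero) x) = 1 :=
    bs_pre_back hs (bs_pre_of_le hs (ax2 x zero)) hstnx.symm
  have hrec4 : s (arr (sarr (arr b N) zero) x) = 1 := bs_pre_trans hs hrec3 htnx2
  have hNWx : N ≤ arr W x := by rw [hN]; exact pbck_arr_mono (BoundedPseudoBCK.zero_le x) W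
  have hNb1 : s (arr N b) = 1 := bs_pre_trans hs (bs_pre_of_le hs hNWx) hWx1
  have hsbN : s (arr b N) = 1 - s x := by
    rw [bs_pre_exact hs hNb1, hsN, hsb]; ring
  have hstnbN : s (sarr (arr b N) zero) = s x := by
    rw [bs_sarr_exact hs (BoundedPseudoBCK.zero_le (arr b N)), bs_zero hs, hsbN]; ring
  have hrecx : s (arr x (sarr (arr b N) zero)) = 1 := bs_pre_back hs hrec4 hstnbN
  have hpt1y : arr y zero ≤ arr (arr W y) N := by rw [hN]; exact pbck_adj2 (ax1 W y zero)
  have hrecy1 : s (arr (arr (arr W y) N) (arr c N)) = 1 := bs_anti_pre hs hn hWy2 N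
  have hrecy2 : s (arr (arr y zero) (arr c N)) = 1 :=
    bs_pre_trans hs (bs_pre_of_le hs hpt1y) hrecy1
  have hrecy3 : s (arr (sarr (arr c N) zero) (sarr (arr y zero) zero)) = 1 :=
    bs_anti_pre' hs hn hrecy2 zero
  have hsny : s (arr y zero) = 1 - s y := by
    rw [bs_arr_exact hs (BoundedPseudoBCK.zero_le y), bs_zero hs]; ring
  have hstny : s (sarr (arr y zero) zero) = s y := by
    rw [bs_sarr_exact hs (BoundedPseudoBCK.zero_le (arr y zero)), bs_zero hs, hsny]; ring
  have htny2 : s (arr (sarr (arr y zero) zero) y) = 1 :=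
    bs_pre_back hs (bs_pre_of_le hs (ax2 y zero)) hstny.symm
  have hrecy4 : s (arr (sarr (arr c N) zero) y) = 1 := bs_pre_trans hs hrecy3 htny2
  have hNWy : N ≤ arr W y := by rw [hN]; exact pbck_arr_mono (BoundedPseudoBCK.zero_le y) W
  have hNc1 : s (arr N c) = 1 := bs_pre_trans hs (bs_pre_of_le hs hNWy) hWy1
  have hscN : s (arr c N) = 1 - s y := by
    rw [bs_pre_exact hs hNc1, hsN]; ring
  have hstncN : s (sarr (arr c N) zero) = s y := by
    rw [bs_sarr_exact hs (BoundedPseudoBCK.zero_le (arr c N)), bs_zero hs, hscN]; ring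
  have hrecy : s (arr y (sarr (arr c N) zero)) = 1 := bs_pre_back hs hrecy4 hstncN
  have Lam : ∀ D : A, s (arr b D) = 1 → s (arr c D) = 1 → s D = 1 := by
    intro D hbD hcD
    by_contra hD
    have h1 : s (arr (arr D N) (arr b N)) = 1 := bs_anti_pre hs hn hbD N
    have h2 : s (arr (sarr (arr b N) zero) (sarr (arr D N) zero)) = 1 :=
      bs_anti_pre' hs hn h1 zero
    have hx1 : s (arr x (sarr (arr D N) zero)) = 1 := bs_pre_trans hs hrecx h2
    have h1' : s (arr (arr D N) (arr c N)) = 1 := bs_anti_pre hs hn hcD N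
    have h2' : s (arr (sarr (arr c N) zero) (sarr (arr D N) zero)) = 1 :=
      bs_anti_pre' hs hn h1' zero
    have hy1 : s (arr y (sarr (arr D N) zero)) = 1 := bs_pre_trans hs hrecy h2'
    have hW1 : s (arr W (sarr (arr D N) zero)) = 1 := minU _ hx1 hy1
    have h3 : s (arr (arr (sarr (arr D N) zero) zero) N) = 1 := by
      have h4 := bs_anti_pre hs hn hW1 zero
      rwa [← hN] at h4
    have h5 : s (arr (arr D N) (arr (sarr (arr D N) zero) zero)) = 1 :=
      bs_pre_of_le hs (ax2' (arr D N) zero)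
    exact hNne (bs_LA hs hn hm hD (bs_pre_trans hs h5 h3))
  have hfin1 : s (arr b (sarr (arr b c) c)) = 1 := bs_pre_of_le hs (ax2 b c)
  have hfin2 : s (arr c (sarr (arr b c) c)) = 1 :=
    bs_pre_of_le hs (pbck_le_sarr_self (arr b c) c)
  have hfin3 : s (sarr (arr b c) c) = 1 := Lam _ hfin1 hfin2
  have hfin4 : s (sarr (arr b c) c) = 1 + s c - s (arr b c) :=
    bs_sarr_exact hs (pbck_le_arr_self b c)
  have hfin5 : s c = s (arr b c) := by rw [hfin3] at hfin4; linarith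
  have hfin6 : s (arr (arr b c) c) = 1 :=
    bs_pre_back hs (bs_pre_of_le hs (pbck_le_arr_self b c)) hfin5
  have hbne : s b ≠ 1 := by
    rw [hsb]
    intro hcontra
    linarith
  exact hA (bs_LA hs hn hm hbne hfin6)

end K

end Aux

theorem stmt_10 {A : Type u} [BoundedPseudoBCK A] (s : A → ℝ)
    (hs : IsBosbachState A s) :
    IsStateMorphism A s ↔
      (IsBCKNormalFilter A {a : A | s a = 1} ∧
        IsBCKMaximalFilter A {a : A | s a = 1}) := by
  constructor
  · intro hmor
    obtain ⟨hbnd, h0, hfa, hfs⟩ := hmor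
    have hfil : IsBCKFilter A {a : A | s a = 1} := by
      constructor
      · exact hs.2.2.1
      · intro a b ha hab
        simp only [Set.mem_setOf_eq] at ha hab ⊢
        rw [hfa, ha] at hab
        have h1 := (hbnd b).2
        rcases le_or_gt 1 (1 - 1 + s b) with h2 | h2
        · linarith
        · rw [min_eq_left (by linarith)] at hab; linarith
    refine ⟨⟨hfil, ?_⟩, hfil, ?_, ?_⟩
    · intro a b
      simp only [Set.mem_setOf_eq, hfa, hfs]
    · intro hcontra
      have h1 : (zero : A) ∈ {a : A | s a = 1} := hcontra ▸ Set.mem_univ _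
      simp only [Set.mem_setOf_eq, hs.2.1] at h1
      exact zero_ne_one h1
    · intro G hG hsub hGuniv
      refine Set.Subset.antisymm ?_ hsub
      intro g hg
      simp only [Set.mem_setOf_eq]
      by_contra hgK
      have hglt : s g < 1 := lt_of_le_of_ne (hbnd g).2 hgK
      have hpos : 0 < 1 - s g := by linarith
      have hstep : ∀ k : ℕ, s (pIter g k zero) = 1 ∨
          (k : ℝ) * (1 - s g) ≤ s (pIter g k zero) := by
        intro k
        induction k with
        | zero =>
          right
          rw [pIter_zero, h0]
          simp
        | succ k ih =>
          have hform : s (pIter g (k + 1) zero) = min (1 - s g + s (pIter g k zero)) 1 :=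
            hfa g _
          rcases le_total 1 (1 - s g + s (pIter g k zero)) with h2 | h2
          · left
            rw [hform, min_eq_right h2]
          · right
            rw [hform, min_eq_left h2]
            rcases ih with h3 | h3
            · exfalso
              rw [h3] at h2
              linarith
            · have hexp : ((k : ℝ) + 1) * (1 - s g) = (k : ℝ) * (1 - s g) + (1 - s g) := by
                ring
              push_cast
              rw [hexp]
              linarith
      obtain ⟨n, hnn⟩ := exists_nat_ge (1 / (1 - s g))
      have hone : s (pIter g n zero) = 1 := by
        rcases hstep n with h | h
        · exact h
        · have h9 : (1 : ℝ) ≤ (n : ℝ) * (1 - s g) := by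
            rw [div_le_iff₀ hpos] at hnn
            linarith
          exact le_antisymm ((hbnd _).2) (by linarith)
      have hdesc : ∀ k : ℕ, pIter g k zero ∈ G → (zero : A) ∈ G := by
        intro k
        induction k with
        | zero => exact id
        | succ k ih => exact fun hk => ih (hG.2 g _ hg hk)
      have h0G : (zero : A) ∈ G := hdesc n (hsub hone)
      apply hGuniv
      apply Set.eq_univ_of_forall
      intro w
      have harrw : arr zero w ∈ G := by
        rw [pbck_arr_eq_one (BoundedPseudoBCK.zero_le w)]
        exact hG.1
      exact hG.2 zero w h0G harrw
  · rintro ⟨hn, hm⟩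
    refine ⟨hs.1, hs.2.1, ?_, ?_⟩
    · intro x y
      rcases le_total (s x) (s y) with h | h
      · rw [bs_crux hs hn hm h, min_eq_right (by linarith)]
      · have h1 : s (arr y x) = 1 := bs_crux hs hn hm h
        have h2 := hs.2.2.2.1 x y
        rw [h1] at h2
        rw [min_eq_left (by linarith)]
        linarith
    · intro x y
      rcases le_total (s x) (s y) with h | h
      · have h1 : s (sarr x y) = 1 := (bs_norm hn x y).mp (bs_crux hs hn hm h)
        rw [h1, min_eq_right (by linarith)]
      · have h1 : s (sarr y x) = 1 := (bs_norm hn y x).mp (bs_crux hs hn hm h)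
        have h2 := hs.2.2.2.2 x y
        rw [h1] at h2
        rw [min_eq_left (by linarith)]
        linarith
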